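/- arXiv:1605.01348 — 2 statements merged into one kernel-verified Lean document; each statement's English description precedes it below -/
import Mathlib

section
/- In any (m,n) secret sharing scheme for a secret W uniformly distributed over an alphabet of size |W|, where any m shares reveal no information about W and all n shares determine W, each share must have entropy at least log|W|/(n-m), i.e., log|S| ≥ log|W|/(n-m) where S is the alphabet of each share. -/
/-!
Fix a set `A` of `m` shares and let `B` be the other `n - m`. Privacy of `A`, then recoverability
of the secret from `(S_A, S_B)`, give
`H(W) = H(W | S_A) ≤ H(W, S_B | S_A) = H(S_B | S_A) ≤ H(S_B) ≤ (n - m) log |S|`,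
and `H(W) = log |W|` for the uniform secret. Besides monotonicity of entropy under functions, the
only inputs are subadditivity and the bound `H(X) ≤ log |X|`, both instances of Gibbs' inequality.
-/

open scoped BigOperators

/-- Probability that random variable `X` takes value `x`, on a finite
probability space with mass function `p`. -/
noncomputable def probOf {Ω α : Type*} [Fintype Ω] [DecidableEq α]
    (p : Ω → ℝ) (X : Ω → α) (x : α) : ℝ :=
  ∑ ω, if X ω = x then p ω else 0

/-- Shannon entropy (in bits) of a random variable on a finite probability space. -/
noncomputable def entropy {Ω α : Type*} [Fintype Ω] [Fintype α] [DecidableEq α]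
    (p : Ω → ℝ) (X : Ω → α) : ℝ :=
  -∑ x, probOf p X x * Real.logb 2 (probOf p X x)

/-- Conditional entropy H(X | Y). -/
noncomputable def condEntropy {Ω α β : Type*} [Fintype Ω] [Fintype α] [DecidableEq α]
    [Fintype β] [DecidableEq β] (p : Ω → ℝ) (X : Ω → α) (Y : Ω → β) : ℝ :=
  entropy p (fun ω => (X ω, Y ω)) - entropy p Y

/-- Mutual information I(X ; Y). -/
noncomputable def mutualInfo {Ω α β : Type*} [Fintype Ω] [Fintype α] [DecidableEq α]
    [Fintype β] [DecidableEq β] (p : Ω → ℝ) (X : Ω → α) (Y : Ω → β) : ℝ :=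
  entropy p X - condEntropy p X Y


open Finset Real

section Shannon

variable {Ω α β γ δ ι : Type*} [Fintype Ω]

section ProbOf

variable [DecidableEq α] (p : Ω → ℝ)

lemma probOf_nonneg (hp0 : ∀ ω, 0 ≤ p ω) (X : Ω → α) (a : α) : 0 ≤ probOf p X a :=
  sum_nonneg fun ω _ => by split_ifs <;> simp [hp0 ω]

lemma sum_probOf_mul [Fintype α] (X : Ω → α) (g : α → ℝ) :
    ∑ a, probOf p X a * g a = ∑ ω, p ω * g (X ω) := by
  simp only [probOf, sum_mul, ite_mul, zero_mul]
  rw [sum_comm]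
  simp only [sum_ite_eq, mem_univ, if_true]

lemma sum_probOf [Fintype α] (hp1 : ∑ ω, p ω = 1) (X : Ω → α) : ∑ a, probOf p X a = 1 := by
  simpa [hp1] using sum_probOf_mul p X fun _ => 1

lemma sum_probOf_mul_comp [Fintype α] [Fintype β] [DecidableEq β] (X : Ω → α) (f : α → β)
    (g : β → ℝ) :
    ∑ a, probOf p X a * g (f a) = ∑ b, probOf p (fun ω => f (X ω)) b * g b := by
  rw [sum_probOf_mul p X fun a => g (f a), sum_probOf_mul]

lemma probOf_le_probOf_comp [DecidableEq β] (hp0 : ∀ ω, 0 ≤ p ω) (X : Ω → α) (f : α → β)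
    (a : α) : probOf p X a ≤ probOf p (fun ω => f (X ω)) (f a) :=
  sum_le_sum fun ω _ => by
    by_cases h : X ω = a
    · simp [h]
    · rw [if_neg h]; split_ifs <;> simp [hp0 ω]

end ProbOf

lemma mul_logb_le_mul_logb_add_sub_div {b q r : ℝ} (hb : 1 < b) (hq : 0 ≤ q) (hr : 0 ≤ r)
    (hqr : r = 0 → q = 0) : q * logb b r ≤ q * logb b q + (r - q) / log b := by
  rcases hq.eq_or_lt with rfl | hq
  · simpa using div_nonneg hr (log_pos hb).le
  have hr : 0 < r := hr.lt_of_ne fun h => hq.ne' (hqr h.symm)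
  have key : q * (log r - log q) ≤ r - q :=
    calc q * (log r - log q) = q * log (r / q) := by rw [log_div hr.ne' hq.ne']
      _ ≤ q * (r / q - 1) :=
        mul_le_mul_of_nonneg_left (log_le_sub_one_of_pos (div_pos hr hq)) hq.le
      _ = r - q := by field_simp
  have hdiff : q * logb b q + (r - q) / log b - q * logb b r
      = (q * log q + (r - q) - q * log r) / log b := by
    simp only [logb]; ring
  rw [← sub_nonneg, hdiff]
  exact div_nonneg (by linarith) (log_pos hb).le

lemma sum_mul_logb_le_sum_mul_logb_self [Fintype ι] {b : ℝ} (hb : 1 < b) (q r : ι → ℝ)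
    (hq : ∀ i, 0 ≤ q i) (hr : ∀ i, 0 ≤ r i) (hqr : ∀ i, r i = 0 → q i = 0)
    (hsum : ∑ i, r i ≤ ∑ i, q i) :
    ∑ i, q i * logb b (r i) ≤ ∑ i, q i * logb b (q i) := by
  have h := sum_le_sum fun i (_ : i ∈ univ) =>
    mul_logb_le_mul_logb_add_sub_div hb (hq i) (hr i) (hqr i)
  rw [sum_add_distrib, ← sum_div, sum_sub_distrib] at h
  have : (∑ i, r i - ∑ i, q i) / log b ≤ 0 :=
    div_nonpos_of_nonpos_of_nonneg (by linarith) (log_pos hb).le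
  linarith

section Entropy

variable [Fintype α] [DecidableEq α] (p : Ω → ℝ)

lemma entropy_eq_logb_card_of_probOf_eq (X : Ω → α)
    (hX : ∀ a, probOf p X a = (Fintype.card α : ℝ)⁻¹) :
    entropy p X = logb 2 (Fintype.card α) := by
  simp only [entropy, hX, sum_const, card_univ, nsmul_eq_mul, logb_inv]
  by_cases h : (Fintype.card α : ℝ) = 0
  · simp [h]
  · field_simp

lemma entropy_le_logb_card (hp0 : ∀ ω, 0 ≤ p ω) (hp1 : ∑ ω, p ω = 1) (X : Ω → α) :
    entropy p X ≤ logb 2 (Fintype.card α) := by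
  obtain ⟨a, -, -⟩ := exists_ne_zero_of_sum_ne_zero (sum_probOf p hp1 X ▸ one_ne_zero)
  have hcard : (0 : ℝ) < Fintype.card α := Nat.cast_pos.2 (Fintype.card_pos_iff.2 ⟨a⟩)
  have h := sum_mul_logb_le_sum_mul_logb_self one_lt_two (probOf p X)
    (fun _ => (Fintype.card α : ℝ)⁻¹) (probOf_nonneg p hp0 X) (fun _ => by positivity)
    (fun _ h => absurd h (by positivity))
    (by simp [sum_probOf p hp1 X, hcard.ne'])
  rw [← sum_mul, sum_probOf p hp1 X, one_mul, logb_inv] at h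
  unfold entropy
  linarith

lemma entropy_comp_le [Fintype β] [DecidableEq β] (hp0 : ∀ ω, 0 ≤ p ω) (X : Ω → α)
    (f : α → β) : entropy p (fun ω => f (X ω)) ≤ entropy p X := by
  unfold entropy
  rw [neg_le_neg_iff, ← sum_probOf_mul_comp p X f]
  refine sum_le_sum fun a _ => ?_
  rcases (probOf_nonneg p hp0 X a).eq_or_lt with h | h
  · simp [← h]
  · exact mul_le_mul_of_nonneg_left
      (logb_le_logb_of_le one_lt_two h (probOf_le_probOf_comp p hp0 X f a)) h.le

lemma entropy_pair_le_add [Fintype β] [DecidableEq β] (hp0 : ∀ ω, 0 ≤ p ω)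
    (hp1 : ∑ ω, p ω = 1) (X : Ω → α) (Y : Ω → β) :
    entropy p (fun ω => (X ω, Y ω)) ≤ entropy p X + entropy p Y := by
  set r := probOf p (fun ω => (X ω, Y ω))
  have hr0 : ∀ z, 0 ≤ r z := probOf_nonneg p hp0 _
  have hrX (z : α × β) : r z ≤ probOf p X z.1 := probOf_le_probOf_comp p hp0 _ Prod.fst z
  have hrY (z : α × β) : r z ≤ probOf p Y z.2 := probOf_le_probOf_comp p hp0 _ Prod.snd z
  have h := sum_mul_logb_le_sum_mul_logb_self one_lt_two r
    (fun z => probOf p X z.1 * probOf p Y z.2) hr0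
    (fun z => mul_nonneg (probOf_nonneg p hp0 X _) (probOf_nonneg p hp0 Y _))
    (fun z hz => (mul_eq_zero.1 hz).elim (fun h => (h ▸ hrX z).antisymm (hr0 z))
      fun h => (h ▸ hrY z).antisymm (hr0 z))
    (by rw [Fintype.sum_prod_type, ← sum_mul_sum, sum_probOf p hp1, sum_probOf p hp1,
      sum_probOf p hp1, one_mul])
  have hsplit (z : α × β) : r z * logb 2 (probOf p X z.1 * probOf p Y z.2)
      = r z * logb 2 (probOf p X z.1) + r z * logb 2 (probOf p Y z.2) := by
    rcases (hr0 z).eq_or_lt with h | h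
    · simp [← h]
    · rw [logb_mul (h.trans_le (hrX z)).ne' (h.trans_le (hrY z)).ne', mul_add]
  have hX :
      ∑ z, r z * logb 2 (probOf p X z.1) = ∑ x, probOf p X x * logb 2 (probOf p X x) :=
    sum_probOf_mul_comp p (fun ω => (X ω, Y ω)) Prod.fst fun x => logb 2 (probOf p X x)
  have hY :
      ∑ z, r z * logb 2 (probOf p Y z.2) = ∑ y, probOf p Y y * logb 2 (probOf p Y y) :=
    sum_probOf_mul_comp p (fun ω => (X ω, Y ω)) Prod.snd fun y => logb 2 (probOf p Y y)
  simp only [hsplit, sum_add_distrib, hX, hY] at h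
  unfold entropy
  linarith

end Entropy

lemma entropy_le_of_mutualInfo_eq_zero_of_condEntropy_eq_zero [Fintype α] [DecidableEq α]
    [Fintype β] [DecidableEq β] [Fintype γ] [DecidableEq γ] [Fintype δ] [DecidableEq δ]
    (p : Ω → ℝ) (hp0 : ∀ ω, 0 ≤ p ω) (hp1 : ∑ ω, p ω = 1)
    (W : Ω → γ) (X : Ω → α) (Y : Ω → β) (Z : Ω → δ) (f : α × β → δ) (g : δ → α)
    (hZ : Z = fun ω => f (X ω, Y ω)) (hX : X = fun ω => g (Z ω))
    (hpriv : mutualInfo p W X = 0) (hrec : condEntropy p W Z = 0) :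
    entropy p W ≤ entropy p Y := by
  have hWX : entropy p (fun ω => (W ω, X ω)) ≤ entropy p (fun ω => (W ω, Z ω)) := by
    rw [hX]
    exact entropy_comp_le p hp0 (fun ω => (W ω, Z ω)) fun wz => (wz.1, g wz.2)
  have hZXY : entropy p Z ≤ entropy p X + entropy p Y :=
    calc entropy p Z = entropy p (fun ω => f (X ω, Y ω)) := by rw [hZ]
      _ ≤ entropy p (fun ω => (X ω, Y ω)) := entropy_comp_le p hp0 _ f
      _ ≤ entropy p X + entropy p Y := entropy_pair_le_add p hp0 hp1 X Y
  unfold mutualInfo condEntropy at *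
  linarith

end Shannon

/-- In any (m,n) secret sharing scheme for a secret uniformly distributed over a
finite alphabet `W`, where any `m` shares reveal no information about the secret and
all `n` shares determine it, each share alphabet `S` satisfies
`log |S| ≥ log |W| / (n - m)`. -/
theorem secret_sharing_share_size
    {Ω W S : Type*} [Fintype Ω] [Fintype W] [DecidableEq W] [Fintype S] [DecidableEq S]
    (p : Ω → ℝ) (hp0 : ∀ ω, 0 ≤ p ω) (hp1 : ∑ ω, p ω = 1)
    (n m : ℕ) (hmn : m < n)
    (secret : Ω → W) (shares : Fin n → Ω → S)
    (hunif : ∀ w, probOf p secret w = (Fintype.card W : ℝ)⁻¹)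
    (hpriv : ∀ A : Finset (Fin n), A.card = m →
      mutualInfo p secret (fun ω => fun i : A => shares i ω) = 0)
    (hrec : condEntropy p secret (fun ω => fun i : Fin n => shares i ω) = 0) :
    Real.logb 2 (Fintype.card S) ≥ Real.logb 2 (Fintype.card W) / ((n : ℝ) - m) := by
  obtain ⟨A, -, hA⟩ := exists_subset_card_eq (s := (univ : Finset (Fin n)))
    (by simpa using hmn.le)
  let split := Equiv.piEquivPiSubtypeProd (· ∈ A) fun _ => S
  have hW : logb 2 (Fintype.card W) ≤ logb 2 (Fintype.card ({i // i ∉ A} → S)) :=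
    calc logb 2 (Fintype.card W) = entropy p secret :=
          (entropy_eq_logb_card_of_probOf_eq p secret hunif).symm
      _ ≤ entropy p (fun ω (i : {i // i ∉ A}) => shares i ω) :=
          entropy_le_of_mutualInfo_eq_zero_of_condEntropy_eq_zero p hp0 hp1 secret
            (fun ω (i : A) => shares i ω) _ (fun ω i => shares i ω) split.symm
            (fun z (i : A) => z i) (funext fun ω => (split.symm_apply_apply _).symm) rfl
            (hpriv A hA) hrec
      _ ≤ _ := entropy_le_logb_card p hp0 hp1 _
  have hcard : Fintype.card ({i // i ∉ A} → S) = Fintype.card S ^ (n - m) := by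
    simp [Fintype.card_subtype_compl, hA]
  rw [hcard, Nat.cast_pow, logb_pow, Nat.cast_sub hmn.le] at hW
  rw [ge_iff_le, div_le_iff₀ (sub_pos.2 (Nat.cast_lt.2 hmn))]
  linarith
end

section
/- (Order-optimality, Region I bound) Let n = min{N,K} > 16, suppose 0 ≤ M_S < max{N,K}/(K-1), K ≥ 2, and set s = ⌊0.205·n⌋. Then s − M_S·s(s−1)/(N−2s) ≥ n/16. -/
set_option maxHeartbeats 1600000


/-- Order-optimality, Region I: let `n = min{N,K} > 16`, `K ≥ 2`,
`0 ≤ M_S < max{N,K}/(K-1)` and `s = ⌊0.205·n⌋`. Then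
`s − M_S·s(s−1)/(N−2s) ≥ n/16`. -/
theorem order_optimality_region_I (N K : ℕ) (hK : 2 ≤ K)
    (hmin : 16 < min N K) (MS : ℝ) (hMS0 : 0 ≤ MS)
    (hMS1 : MS < (max N K : ℕ) / ((K : ℝ) - 1))
    (s : ℕ) (hs : s = ⌊(0.205 : ℝ) * (min N K : ℕ)⌋₊) :
    (s : ℝ) - MS * ((s : ℝ) * ((s : ℝ) - 1)) / ((N : ℝ) - 2 * s) ≥
      ((min N K : ℕ) : ℝ) / 16 := by
  have hNn : 16 < N := lt_of_lt_of_le hmin (min_le_left _ _)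
  have hKn : 16 < K := lt_of_lt_of_le hmin (min_le_right _ _)
  have hNR : (17:ℝ) ≤ N := by exact_mod_cast hNn
  have hKR : (17:ℝ) ≤ K := by exact_mod_cast hKn
  have hnR : (17:ℝ) ≤ (min N K : ℕ) := by exact_mod_cast hmin
  have hnN : ((min N K : ℕ):ℝ) ≤ N := by exact_mod_cast min_le_left N K
  have hnK : ((min N K : ℕ):ℝ) ≤ K := by exact_mod_cast min_le_right N K
  have hsle : (s:ℝ) ≤ 0.205 * ((min N K : ℕ):ℝ) := by
    rw [hs]; exact Nat.floor_le (by positivity)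
  have hslt : 0.205 * ((min N K : ℕ):ℝ) < (s:ℝ) + 1 := by
    rw [hs]; exact Nat.lt_floor_add_one _
  have hs3 : (3:ℝ) ≤ (s:ℝ) := by
    have : (3:ℕ) ≤ s := by rw [hs]; exact Nat.le_floor (by nlinarith : ((3:ℕ):ℝ) ≤ 0.205 * ((min N K : ℕ):ℝ))
    exact_mod_cast this
  have hdenpos : (0:ℝ) < (N:ℝ) - 2*s := by nlinarith
  have hden : (0.59:ℝ) * N ≤ (N:ℝ) - 2*s := by nlinarith
  have hK1 : (0:ℝ) < (K:ℝ) - 1 := by linarith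
  have hMS1' : MS * ((K:ℝ) - 1) < (max N K : ℕ) := by
    rw [← lt_div_iff₀ hK1]; exact hMS1
  have key : MS * ((s:ℝ) * ((s:ℝ) - 1)) / ((N:ℝ) - 2*s) ≤ (s:ℝ) - ((min N K : ℕ):ℝ)/16 := by
    rw [div_le_iff₀ hdenpos]
    rcases le_total N K with h | h
    · rw [min_eq_left h] at hsle hslt hnR ⊢
      rw [max_eq_right h] at hMS1'
      have hMS2 : MS * 16 ≤ 17 := by nlinarith
      nlinarith [mul_nonneg hMS0 (sub_nonneg.mpr hs3), mul_nonneg hMS0 (by linarith : (0:ℝ) ≤ (s:ℝ)),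
        mul_le_mul_of_nonneg_right hMS2 (sub_nonneg.mpr hs3),
        mul_nonneg (mul_nonneg hMS0 (by linarith : (0:ℝ) ≤ (s:ℝ)-1)) (by linarith : (0:ℝ) ≤ 0.205*(N:ℝ) - s)]
    · rw [min_eq_right h] at hsle hslt hnR ⊢
      rw [max_eq_left h] at hMS1'
      have hMS3 : MS * ((s:ℝ) - 1) ≤ 0.205 * N := by nlinarith
      have h1 : (0:ℝ) ≤ (s:ℝ) - (K:ℝ)/16 := by linarith
      have h2 : ((s:ℝ) - (K:ℝ)/16)*(0.59*(N:ℝ)) ≤ ((s:ℝ) - (K:ℝ)/16)*((N:ℝ)-2*s) :=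
        mul_le_mul_of_nonneg_left hden h1
      have h3 : 0.205*(N:ℝ)*(s:ℝ) ≤ ((s:ℝ) - (K:ℝ)/16)*(0.59*(N:ℝ)) := by
        nlinarith [mul_nonneg (by linarith : (0:ℝ) ≤ (N:ℝ))
          (by linarith : (0:ℝ) ≤ 0.385*(s:ℝ) - 0.036875*(K:ℝ))]
      have h4 : MS * ((s:ℝ)*((s:ℝ)-1)) ≤ 0.205*(N:ℝ)*(s:ℝ) := by
        nlinarith [mul_le_mul_of_nonneg_right hMS3 (by linarith : (0:ℝ) ≤ (s:ℝ))]
      linarith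
  linarith
end
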